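/- arXiv:2112.04416 — 2 statements merged into one kernel-verified Lean document; each statement's English description precedes it below -/
import Mathlib

section
/- There exists a continuous 1-periodic function Φ : ℝ → ℝ such that the summatory function of the periodicity function of the Thue–Morse word satisfies P_t(n) = n² Φ({log₂ n}) + O(n log n) as n → ∞, where {z} denotes the fractional part of z. -/
open Finset Filter Asymptotics

/-- `n` is a local period of the infinite word `w` at position `i`:
`n ≥ 1` and either (`n ≤ i` and `w_{i+k} = w_{i-n+k}` for all `k < n`)
or (`n > i` and `w_k = w_{n+k}` for all `k < i`). -/
def IsLocalPeriodAt {α : Type*} (w : ℕ → α) (i n : ℕ) : Prop :=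
  1 ≤ n ∧ ((n ≤ i ∧ ∀ k < n, w (i + k) = w (i - n + k)) ∨
           (i < n ∧ ∀ k < i, w k = w (n + k)))

/-- The periodicity function `p_w(i)`: the least local period of `w` at `i`. -/
noncomputable def perFn {α : Type*} (w : ℕ → α) (i : ℕ) : ℕ :=
  sInf {n | IsLocalPeriodAt w i n}

/-- The summatory function `P_w(n) = ∑_{j<n} p_w(j)`. -/
noncomputable def sumFn {α : Type*} (w : ℕ → α) (n : ℕ) : ℕ :=
  ∑ j ∈ Finset.range n, perFn w j

/-- The periodic complexity `h_w(n) = P_w(n)/n`. -/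
noncomputable def perComplexity {α : Type*} (w : ℕ → α) (n : ℕ) : ℝ :=
  (sumFn w n : ℝ) / n

/-- The Thue–Morse word: `t_i = 0` iff the number of 1's in the binary
representation of `i` is even. -/
def tm (i : ℕ) : ℕ :=
  if Even ((Nat.digits 2 i).count 1) then 0 else 1

/-!
At an odd position `i` with `2 ^ k ≤ i < 2 ^ (k + 1)` the least local period of the Thue–Morse
word is `3 * 2 ^ k`. The prefix of length `2 ^ (k + 1)` recurs after `3 * 2 ^ k` letters, so this is
a local period. Conversely, since `t (2m) = t m` and `t (2m + 1) = 1 - t m`, an even local period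
`2k` at `i` yields the local period `k` at an odd position next to `i / 2`, while an odd local
period forces three equal consecutive letters. At even positions the least local period is `1` or
`2`. Summing `3 * 2 ^ ⌊log₂ j⌋` over the odd `j < n` gives `(3/2) 2^m n - 4^m + O(n)` with
`m = ⌊log₂ n⌋`, and writing `2^m = n 2^(-{log₂ n})` turns this into `n² Φ({log₂ n})` with
`Φ(y) = (3/2) 2^(-y) - 4^(-y)`; as `Φ(0) = Φ(1)`, `Φ ∘ fract` is continuous. The error is even
`O(n)`.
-/

-- With truncated subtraction, `i - n = 0` for `n > i`: one window covers both alternatives.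
theorem isLocalPeriodAt_iff {α : Type*} {w : ℕ → α} {i n : ℕ} :
    IsLocalPeriodAt w i n ↔ 1 ≤ n ∧ ∀ x, i - n ≤ x → x < i → w x = w (x + n) := by
  refine and_congr_right fun _ => ⟨?_, fun h => ?_⟩
  · rintro (⟨hni, h⟩ | ⟨hin, h⟩) x hx₁ hx₂
    · simpa [show i - n + (x - (i - n)) = x by omega, show i + (x - (i - n)) = x + n by omega]
        using (h (x - (i - n)) (by omega)).symm
    · simpa [add_comm] using h x hx₂
  · rcases le_or_gt n i with hni | hin
    · exact .inl ⟨hni, fun k hk => by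
        simpa [show i - n + k + n = i + k by omega]
          using (h (i - n + k) (by omega) (by omega)).symm⟩
    · exact .inr ⟨hin, fun k hk => by simpa [add_comm] using h k (by omega) hk⟩

theorem tm_le_one (i : ℕ) : tm i ≤ 1 := by
  unfold tm; split <;> simp

theorem tm_two_mul (m : ℕ) : tm (2 * m) = tm m := by
  rcases Nat.eq_zero_or_pos m with rfl | hm
  · rfl
  · simp [tm, Nat.digits_def' one_lt_two (by omega : 0 < 2 * m)]

theorem tm_two_mul_add_one (m : ℕ) : tm (2 * m + 1) = 1 - tm m := by
  rw [tm, Nat.digits_def' one_lt_two (by omega)]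
  simp only [Nat.mul_add_mod_self_left, Nat.mul_add_div two_pos, List.count_cons_self,
    Nat.even_add_one, tm]
  split_ifs <;> simp_all

theorem tm_add_two_mul_eq_iff (x k : ℕ) :
    tm (x + 2 * k) = tm x ↔ tm (x / 2 + k) = tm (x / 2) := by
  obtain ⟨m, rfl | rfl⟩ : ∃ m, x = 2 * m ∨ x = 2 * m + 1 := ⟨x / 2, by omega⟩
  · rw [← mul_add, tm_two_mul, tm_two_mul, Nat.mul_div_cancel_left m two_pos]
  · rw [show 2 * m + 1 + 2 * k = 2 * (m + k) + 1 by ring, tm_two_mul_add_one, tm_two_mul_add_one,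
      show (2 * m + 1) / 2 = m by omega]
    have := tm_le_one m; have := tm_le_one (m + k); omega

theorem tm_two_mul_ne (m : ℕ) : tm (2 * m) ≠ tm (2 * m + 1) := by
  rw [tm_two_mul, tm_two_mul_add_one]; have := tm_le_one m; omega

theorem tm_add_one_ne_add_two_of_eq (a : ℕ) (h₀ : tm a = tm (a + 1)) :
    tm (a + 1) ≠ tm (a + 2) := by
  obtain ⟨m, rfl | rfl⟩ : ∃ m, a = 2 * m ∨ a = 2 * m + 1 := ⟨a / 2, by omega⟩
  · exact absurd h₀ (tm_two_mul_ne m)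
  · exact tm_two_mul_ne (m + 1)

theorem tm_add_three_mul_two_pow {k j : ℕ} (hj : j < 2 ^ (k + 1)) :
    tm (j + 3 * 2 ^ k) = tm j := by
  induction k generalizing j with
  | zero => interval_cases j <;> decide
  | succ k ih =>
    rw [show 3 * 2 ^ (k + 1) = 2 * (3 * 2 ^ k) by ring, tm_add_two_mul_eq_iff]
    exact ih (by rw [pow_succ] at hj; omega)

theorem tm_eq_succ_of_odd_shift_at_even {m k : ℕ} (h₀ : tm (2 * m) = tm (2 * m + (2 * k + 1)))
    (h₁ : tm (2 * m + 1) = tm (2 * m + 1 + (2 * k + 1))) : tm (m + k) = tm (m + k + 1) := by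
  rw [show 2 * m + (2 * k + 1) = 2 * (m + k) + 1 by ring, tm_two_mul, tm_two_mul_add_one] at h₀
  rw [show 2 * m + 1 + (2 * k + 1) = 2 * (m + k + 1) by ring, tm_two_mul, tm_two_mul_add_one] at h₁
  have := tm_le_one m; have := tm_le_one (m + k); have := tm_le_one (m + k + 1); omega

theorem tm_eq_succ_of_odd_shift_at_odd {m k : ℕ}
    (h₁ : tm (2 * m + 1) = tm (2 * m + 1 + (2 * k + 1)))
    (h₂ : tm (2 * m + 2) = tm (2 * m + 2 + (2 * k + 1))) : tm m = tm (m + 1) := by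
  rw [show 2 * m + 1 + (2 * k + 1) = 2 * (m + k + 1) by ring, tm_two_mul, tm_two_mul_add_one] at h₁
  rw [show 2 * m + 2 + (2 * k + 1) = 2 * (m + k + 1) + 1 by ring,
    show 2 * m + 2 = 2 * (m + 1) by ring, tm_two_mul, tm_two_mul_add_one] at h₂
  have := tm_le_one m; have := tm_le_one (m + 1); have := tm_le_one (m + k + 1); omega

theorem eq_one_and_three_le_of_tm_odd_shift {i n : ℕ} (hi : Odd i) (hn : Odd n)
    (h : ∀ x, i - n ≤ x → x < i → tm x = tm (x + n)) : i = 1 ∧ 3 ≤ n := by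
  obtain ⟨r, rfl⟩ := hi
  obtain ⟨k, rfl⟩ := hn
  rcases Nat.eq_zero_or_pos r with rfl | hr
  · refine ⟨rfl, ?_⟩
    rcases Nat.eq_zero_or_pos k with rfl | hk
    · exact absurd (h 0 le_rfl one_pos) (by decide)
    · omega
  exfalso
  obtain ⟨s, rfl⟩ : ∃ s, r = s + 1 := ⟨r - 1, by omega⟩
  have hx : ∀ x, 2 * s + 2 - 2 * k ≤ x → x ≤ 2 * s + 2 → tm x = tm (x + (2 * k + 1)) :=
    fun x hx₁ hx₂ => h x (by omega) (by omega)
  rcases k with _ | _ | k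
  · exact tm_two_mul_ne (s + 1) (hx _ le_rfl le_rfl)
  · exact tm_add_one_ne_add_two_of_eq s
      (tm_eq_succ_of_odd_shift_at_odd (m := s) (hx _ (by omega) (by omega))
        (hx _ (by omega) le_rfl))
      (tm_eq_succ_of_odd_shift_at_even (m := s) (hx _ (by omega) (by omega))
        (hx _ (by omega) (by omega)))
  · rcases s with _ | s
    · exact absurd (tm_eq_succ_of_odd_shift_at_odd (m := 0) (hx 1 (by omega) (by omega))
        (hx 2 (by omega) le_rfl)) (by decide)
    · exact tm_add_one_ne_add_two_of_eq s
        (tm_eq_succ_of_odd_shift_at_odd (m := s) (hx _ (by omega) (by omega))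
          (hx _ (by omega) (by omega)))
        (tm_eq_succ_of_odd_shift_at_odd (m := s + 1) (hx _ (by omega) (by omega))
          (hx _ (by omega) (by omega)))

theorem three_mul_two_pow_log_le_of_tm_shift {i n : ℕ} (hi : Odd i) (hn : 1 ≤ n)
    (h : ∀ x, i - n ≤ x → x < i → tm x = tm (x + n)) : 3 * 2 ^ Nat.log 2 i ≤ n := by
  induction n using Nat.strong_induction_on generalizing i with
  | _ n ih =>
  obtain ⟨k, rfl | rfl⟩ : ∃ k, n = 2 * k ∨ n = 2 * k + 1 := ⟨n / 2, by omega⟩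
  swap
  · obtain ⟨rfl, hn⟩ := eq_one_and_three_le_of_tm_odd_shift hi ⟨k, rfl⟩ h
    simpa using hn
  obtain ⟨r, rfl⟩ := hi
  have hhalf : ∀ m, r - k ≤ m → m ≤ r → tm m = tm (m + k) := by
    intro m hm₁ hm₂
    obtain ⟨x, hx₁, hx₂, rfl⟩ : ∃ x, 2 * r + 1 - 2 * k ≤ x ∧ x < 2 * r + 1 ∧ x / 2 = m :=
      if hm : 2 * r + 1 - 2 * k ≤ 2 * m then ⟨2 * m, hm, by omega, by omega⟩
      else ⟨2 * m + 1, by omega, by omega, by omega⟩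
    exact ((tm_add_two_mul_eq_iff x k).1 (h x hx₁ hx₂).symm).symm
  obtain ⟨i', hi', hri', hi'r⟩ : ∃ i', Odd i' ∧ r ≤ i' ∧ i' ≤ r + 1 := by
    rcases Nat.even_or_odd r with hr | hr
    · exact ⟨r + 1, hr.add_one, by omega, le_rfl⟩
    · exact ⟨r, hr, le_rfl, by omega⟩
  have hk := ih k (by omega) hi' (by omega) fun x hx₁ hx₂ => hhalf x (by omega) (by omega)
  have hlog : Nat.log 2 (2 * r + 1) ≤ Nat.log 2 i' + 1 := by
    have h₁ := Nat.log_div_base 2 (2 * r + 1)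
    have h₂ := Nat.log_mono_right (b := 2) (show (2 * r + 1) / 2 ≤ i' by omega)
    omega
  calc 3 * 2 ^ Nat.log 2 (2 * r + 1) ≤ 3 * 2 ^ (Nat.log 2 i' + 1) := by gcongr; norm_num
    _ ≤ 2 * k := by rw [pow_succ]; omega

theorem isLocalPeriodAt_tm_three_mul_two_pow_log (i : ℕ) :
    IsLocalPeriodAt tm i (3 * 2 ^ Nat.log 2 i) := by
  have hi := Nat.lt_pow_succ_log_self one_lt_two i
  rw [pow_succ] at hi
  refine isLocalPeriodAt_iff.2 ⟨Nat.one_le_iff_ne_zero.2 (by positivity), fun x _ hx => ?_⟩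
  exact (tm_add_three_mul_two_pow (by rw [pow_succ]; omega)).symm

theorem perFn_tm_of_odd {i : ℕ} (hi : Odd i) : perFn tm i = 3 * 2 ^ Nat.log 2 i :=
  IsLeast.csInf_eq ⟨isLocalPeriodAt_tm_three_mul_two_pow_log i, fun _ hn =>
    have hn := isLocalPeriodAt_iff.1 hn
    three_mul_two_pow_log_le_of_tm_shift hi hn.1 hn.2⟩

theorem perFn_tm_le_two_of_even {i : ℕ} (hi : Even i) : perFn tm i ≤ 2 := by
  obtain ⟨u, rfl | rfl⟩ : ∃ u, i = 0 ∨ i = 2 * u + 2 :=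
    ⟨i / 2 - 1, by rcases hi with ⟨r, rfl⟩; omega⟩
  · refine (Nat.sInf_le (isLocalPeriodAt_iff.2 ⟨le_rfl, fun x _ hx => ?_⟩)).trans one_le_two
    exact absurd hx x.not_lt_zero
  have h₀ : tm (2 * u) ≠ tm (2 * u + 1) := tm_two_mul_ne u
  have h₁ : tm (2 * u + 2) ≠ tm (2 * u + 3) := tm_two_mul_ne (u + 1)
  have := tm_le_one (2 * u); have := tm_le_one (2 * u + 1)
  have := tm_le_one (2 * u + 2); have := tm_le_one (2 * u + 3)
  by_cases h : tm (2 * u + 1) = tm (2 * u + 2)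
  · refine (Nat.sInf_le (isLocalPeriodAt_iff.2 ⟨le_rfl, fun x hx₁ hx₂ => ?_⟩)).trans one_le_two
    obtain rfl : x = 2 * u + 1 := by omega
    exact h
  · refine Nat.sInf_le (isLocalPeriodAt_iff.2 ⟨one_le_two, fun x hx₁ hx₂ => ?_⟩)
    obtain rfl | rfl : x = 2 * u ∨ x = 2 * u + 1 := by omega
    · omega
    · show tm (2 * u + 1) = tm (2 * u + 3)
      omega

def tmOddSum (n : ℕ) : ℕ :=
  ∑ j ∈ range n, if Odd j then 3 * 2 ^ Nat.log 2 j else 0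

theorem tmOddSum_le_sumFn (n : ℕ) : tmOddSum n ≤ sumFn tm n := by
  refine sum_le_sum fun j _ => ?_
  split_ifs with hj
  · exact (perFn_tm_of_odd hj).ge
  · exact Nat.zero_le _

theorem sumFn_le_tmOddSum (n : ℕ) : sumFn tm n ≤ tmOddSum n + 2 * n :=
  calc sumFn tm n ≤ ∑ j ∈ range n, ((if Odd j then 3 * 2 ^ Nat.log 2 j else 0) + 2) := by
        refine sum_le_sum fun j _ => ?_
        split_ifs with hj
        · exact (perFn_tm_of_odd hj).le.trans le_self_add
        · exact (perFn_tm_le_two_of_even (Nat.not_odd_iff_even.1 hj)).trans le_add_self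
    _ = tmOddSum n + 2 * n := by
        rw [sum_add_distrib, sum_const, card_range, smul_eq_mul, mul_comm, tmOddSum]

theorem tmOddSum_eq {n : ℕ} (hn : 1 ≤ n) :
    (tmOddSum n : ℝ) = 3 / 2 * 2 ^ Nat.log 2 n * n - 4 ^ Nat.log 2 n + 1
      - 3 / 2 * 2 ^ Nat.log 2 n * (n % 2 : ℕ) := by
  induction n, hn using Nat.le_induction with
  | base => simp [tmOddSum]
  | succ n hn ih =>
    rw [tmOddSum, sum_range_succ, ← tmOddSum, Nat.cast_add, ih]
    set m := Nat.log 2 n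
    have hm₀ : 2 ^ m ≤ n := Nat.pow_log_le_self 2 (by omega)
    have hm₁ : n + 1 ≤ 2 ^ (m + 1) := Nat.lt_pow_succ_log_self one_lt_two n
    rcases Nat.even_or_odd n with hev | hodd
    · have hpar := Nat.even_iff.1 hev
      have hlt : n + 1 < 2 ^ (m + 1) := by
        refine hm₁.lt_of_ne fun h => ?_
        rw [pow_succ] at h
        omega
      rw [Nat.log_eq_of_pow_le_of_lt_pow (by omega) hlt, if_neg (Nat.not_odd_iff_even.2 hev), hpar,
        show (n + 1) % 2 = 1 by omega]
      push_cast
      ring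
    · have hpar := Nat.odd_iff.1 hodd
      rw [if_pos hodd, hpar, show (n + 1) % 2 = 0 by omega]
      rcases hm₁.lt_or_eq with hlt | heq
      · rw [Nat.log_eq_of_pow_le_of_lt_pow (by omega) hlt]
        push_cast
        ring
      · have heqR : (n : ℝ) + 1 = 2 ^ (m + 1) := by exact_mod_cast heq
        have h4 : (4 : ℝ) ^ m = 2 ^ m * 2 ^ m := by rw [← mul_pow]; norm_num
        rw [heq, Nat.log_pow one_lt_two]
        push_cast
        linear_combination (3 / 2 * (2 : ℝ) ^ m) * heqR + 3 * h4

noncomputable def tmPhi (y : ℝ) : ℝ :=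
  3 / 2 * 2 ^ (-Int.fract y) - 4 ^ (-Int.fract y)

theorem continuous_tmPhi : Continuous tmPhi := by
  have hg : Continuous fun y : ℝ => 3 / 2 * (2 : ℝ) ^ (-y) - (4 : ℝ) ^ (-y) := by
    fun_prop (disch := norm_num)
  refine ContinuousOn.comp_fract'' hg.continuousOn ?_
  norm_num

theorem tmPhi_periodic : Function.Periodic tmPhi 1 := by
  intro y
  simp only [tmPhi, Int.fract_add_one]

theorem sq_mul_tmPhi_fract_logb {n : ℕ} (hn : 1 ≤ n) :
    (n : ℝ) ^ 2 * tmPhi (Int.fract (Real.logb 2 n)) =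
      3 / 2 * 2 ^ Nat.log 2 n * n - 4 ^ Nat.log 2 n := by
  have hn₀ : (0 : ℝ) < n := by exact_mod_cast hn
  have hfract : Int.fract (Real.logb 2 n) = Real.logb 2 n - Nat.log 2 n := by
    rw [Int.fract, show (2 : ℝ) = (2 : ℕ) by norm_num, Real.floor_logb_natCast hn₀.le,
      Int.log_natCast, Int.cast_natCast]
  have h2 : (2 : ℝ) ^ (-Int.fract (Real.logb 2 n)) = 2 ^ Nat.log 2 n / n := by
    rw [hfract, neg_sub, Real.rpow_sub two_pos, Real.rpow_natCast, Real.rpow_logb two_pos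
      (by norm_num) hn₀]
  have h4 : (4 : ℝ) ^ (-Int.fract (Real.logb 2 n)) = (2 ^ Nat.log 2 n / n) ^ 2 := by
    rw [← h2, ← Real.rpow_natCast, ← Real.rpow_mul two_pos.le,
      show (4 : ℝ) = 2 ^ (2 : ℝ) by norm_num, ← Real.rpow_mul two_pos.le]
    ring_nf
  have h4' : (4 : ℝ) ^ Nat.log 2 n = (2 ^ Nat.log 2 n) ^ 2 := by
    rw [← pow_mul, mul_comm, pow_mul]; norm_num
  rw [tmPhi, Int.fract_fract, h2, h4, h4']
  field_simp

theorem abs_sumFn_tm_sub_le {n : ℕ} (hn : 1 ≤ n) :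
    |(sumFn tm n : ℝ) - (n : ℝ) ^ 2 * tmPhi (Int.fract (Real.logb 2 n))| ≤ 3 * n := by
  have hlow : (tmOddSum n : ℝ) ≤ sumFn tm n := by exact_mod_cast tmOddSum_le_sumFn n
  have hupp : (sumFn tm n : ℝ) ≤ tmOddSum n + 2 * n := by exact_mod_cast sumFn_le_tmOddSum n
  have hpow : (2 : ℝ) ^ Nat.log 2 n ≤ n := by exact_mod_cast Nat.pow_log_le_self 2 (by omega)
  have hpar : ((n % 2 : ℕ) : ℝ) ≤ 1 := by exact_mod_cast Nat.le_of_lt_succ (Nat.mod_lt n two_pos)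
  have hn' : (1 : ℝ) ≤ n := by exact_mod_cast hn
  rw [tmOddSum_eq hn] at hlow hupp
  rw [sq_mul_tmPhi_fract_logb hn, abs_le]
  constructor <;>
    nlinarith [pow_pos (two_pos (α := ℝ)) (Nat.log 2 n), Nat.cast_nonneg (α := ℝ) (n % 2)]

theorem tm_sumFn_asymptotics :
    ∃ Φ : ℝ → ℝ, Continuous Φ ∧ Function.Periodic Φ 1 ∧
      (fun n : ℕ => (sumFn tm n : ℝ) - (n : ℝ) ^ 2 * Φ (Int.fract (Real.logb 2 n)))
        =O[atTop] (fun n : ℕ => (n : ℝ) * Real.log n) := by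
  refine ⟨tmPhi, continuous_tmPhi, tmPhi_periodic, ?_⟩
  have hlin : (fun n : ℕ => (sumFn tm n : ℝ) - (n : ℝ) ^ 2 * tmPhi (Int.fract (Real.logb 2 n)))
      =O[atTop] (fun n : ℕ => (n : ℝ)) :=
    IsBigO.of_bound 3 <| eventually_atTop.2 ⟨1, fun n hn => by
      simpa only [Real.norm_eq_abs, Nat.abs_cast] using abs_sumFn_tm_sub_le hn⟩
  have hlog : (fun x : ℝ => x) =O[atTop] fun x => x * Real.log x := by
    simpa using (isBigO_refl (fun x : ℝ => x) atTop).mul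
      (Real.isLittleO_const_log_atTop (c := 1)).isBigO
  exact hlin.trans (hlog.comp_tendsto tendsto_natCast_atTop_atTop)
end

section
/- For all n ≥ 1, the periodic complexity of the period-doubling word satisfies (1/3)log₂ n − 1/18 ≤ h_pd(n) ≤ (4/3)log₂ n + 3. In particular, h_pd(n) = Θ(log n). -/
/-!
Local periods of `pd` follow the morphism `0 ↦ 01, 1 ↦ 00`: a local period `q` at `i` doubles
to a local period `2q` at `2i` and at `2i + 1`, and an even local period at `2i` or `2i + 1`
halves to one at `i`. Since the letters at odd positions encode the word itself, odd local
periods are impossible at `2i + 1` when `pd i = 0` and at `2i` when `pd (i - 1) = 0` (for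
`i ≥ 1`), while one of `p(i), p(2i), p(2i+1)` is always `1`. Hence
`2 p(i) + 1 ≤ p(2i) + p(2i+1) ≤ 2 p(i) + 2`, and so `2 P(m) + m ≤ P(2m) ≤ 2 P(m) + 2m`.
Induction over the dyadic blocks turns this into `(n + 1) j + 2 ≤ 2 P(n)` for
`2^j ≤ n < 2^(j+1)` and `P(n) + 2 ≤ (n - 1)(j + 5)` for `2^j < n ≤ 2^(j+1)`. The stated bounds
follow; the upper one also uses that `log₂` lies above its chord on `[2^j, 2^(j+1)]`.
-/

open Finset Filter Asymptotics

/-- The period-doubling word: `pd_i = 1` iff the 2-adic valuation of `i+1` is odd. -/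
def pd (i : ℕ) : ℕ :=
  if Odd ((i + 1).factorization 2) then 1 else 0

section Word

variable {α : Type*} {w : ℕ → α} {i j n : ℕ}

theorem perFn_le (h : IsLocalPeriodAt w i n) : perFn w i ≤ n := Nat.sInf_le h

theorem isLocalPeriodAt_perFn (h : IsLocalPeriodAt w i n) : IsLocalPeriodAt w i (perFn w i) :=
  Nat.sInf_mem (s := {n | IsLocalPeriodAt w i n}) ⟨n, h⟩

theorem perFn_zero : perFn w 0 = 1 :=
  le_antisymm (perFn_le ⟨le_rfl, Or.inr ⟨one_pos, by simp⟩⟩)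
    (isLocalPeriodAt_perFn (n := 1) ⟨le_rfl, Or.inr ⟨one_pos, by simp⟩⟩).1

theorem isLocalPeriodAt_succ_one_iff : IsLocalPeriodAt w (j + 1) 1 ↔ w (j + 1) = w j := by
  constructor
  · rintro ⟨-, ⟨-, h⟩ | ⟨hj, -⟩⟩
    · simpa using h 0 one_pos
    · omega
  · intro h
    exact ⟨le_rfl, Or.inl ⟨by omega, fun k hk => by simpa [Nat.lt_one_iff.mp hk] using h⟩⟩

theorem perFn_succ_eq_one_iff : perFn w (j + 1) = 1 ↔ w (j + 1) = w j := by
  rw [← isLocalPeriodAt_succ_one_iff]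
  refine ⟨fun h => ?_, fun h => le_antisymm (perFn_le h) (isLocalPeriodAt_perFn h).1⟩
  obtain ⟨n, hn⟩ := Nat.nonempty_of_sInf_eq_succ h
  simpa [h] using isLocalPeriodAt_perFn hn

theorem sumFn_mono : Monotone (sumFn w) := fun _ _ h =>
  Finset.sum_le_sum_of_subset (Finset.range_subset_range.mpr h)

theorem sumFn_two_mul (n : ℕ) :
    sumFn w (2 * n) = ∑ i ∈ Finset.range n, (perFn w (2 * i) + perFn w (2 * i + 1)) := by
  induction n with
  | zero => rfl
  | succ n ih =>
    rw [Finset.sum_range_succ, ← ih, show 2 * (n + 1) = 2 * n + 1 + 1 by ring, sumFn, sumFn,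
      Finset.sum_range_succ, Finset.sum_range_succ, add_assoc]

end Word

section PeriodDoubling

variable {i q r a b m n : ℕ}

theorem pd_le_one (i : ℕ) : pd i ≤ 1 := by
  unfold pd; split <;> omega

theorem pd_two_mul (i : ℕ) : pd (2 * i) = 0 := by
  simp [pd, Nat.factorization_eq_zero_of_not_dvd (show ¬ 2 ∣ 2 * i + 1 by omega)]

theorem pd_two_mul_add_one (i : ℕ) : pd (2 * i + 1) = 1 - pd i := by
  have hv : (2 * i + 1 + 1).factorization 2 = (i + 1).factorization 2 + 1 := by
    rw [show 2 * i + 1 + 1 = 2 * (i + 1) by ring, Nat.factorization_mul two_ne_zero (by omega)]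
    simp [Nat.prime_two.factorization_self, add_comm]
  simp only [pd, hv, Nat.odd_add_one]
  split <;> simp_all

theorem pd_two_mul_add_one_eq_iff : pd (2 * a + 1) = pd (2 * b + 1) ↔ pd a = pd b := by
  have := pd_le_one a; have := pd_le_one b
  rw [pd_two_mul_add_one, pd_two_mul_add_one]; omega

theorem pd_zero : pd 0 = 0 := pd_two_mul 0

theorem pd_one : pd 1 = 1 := by simpa [pd_zero] using pd_two_mul_add_one 0

theorem pd_eq_zero_of_pd_succ_eq_one (h : pd (i + 1) = 1) : pd i = 0 := by
  obtain ⟨k, rfl | rfl⟩ := Nat.even_or_odd' i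
  · exact pd_two_mul k
  · simp [show 2 * k + 1 + 1 = 2 * (k + 1) by ring, pd_two_mul] at h

/-- Equal factors of `pd` stay equal under the morphism `0 ↦ 01, 1 ↦ 00`, and the images
are followed by the same letter `0`. -/
theorem pd_two_mul_add_eq (h : ∀ k < m, pd (a + k) = pd (b + k)) :
    ∀ k ≤ 2 * m, pd (2 * a + k) = pd (2 * b + k) := by
  intro k hk
  obtain ⟨l, rfl | rfl⟩ := Nat.even_or_odd' k
  · simp only [← mul_add, pd_two_mul]
  · simpa only [← add_assoc, ← mul_add, pd_two_mul_add_one_eq_iff] using h l (by omega)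

theorem IsLocalPeriodAt.two_mul_add (hr : r < 2) (h : IsLocalPeriodAt pd i q) :
    IsLocalPeriodAt pd (2 * i + r) (2 * q) := by
  obtain ⟨hq, ⟨hqi, hs⟩ | ⟨hiq, hp⟩⟩ := h
  · refine ⟨by omega, Or.inl ⟨by omega, fun k hk => ?_⟩⟩
    have := pd_two_mul_add_eq hs (r + k) (by omega)
    rwa [← add_assoc, show 2 * (i - q) + (r + k) = 2 * i + r - 2 * q + k by omega] at this
  · refine ⟨by omega, Or.inr ⟨by omega, fun k hk => ?_⟩⟩
    simpa using pd_two_mul_add_eq (a := 0) (by simpa using hp) k (by omega)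

theorem IsLocalPeriodAt.of_two_mul_add (hr : r < 2) (h : IsLocalPeriodAt pd (2 * i + r) (2 * q)) :
    IsLocalPeriodAt pd i q := by
  obtain ⟨hq, ⟨hqi, hs⟩ | ⟨hiq, hp⟩⟩ := h
  · refine ⟨by omega, Or.inl ⟨by omega, fun k hk => ?_⟩⟩
    have := hs (2 * k + 1 - r) (by omega)
    rwa [show 2 * i + r + (2 * k + 1 - r) = 2 * (i + k) + 1 by omega,
      show 2 * i + r - 2 * q + (2 * k + 1 - r) = 2 * (i - q + k) + 1 by omega,
      pd_two_mul_add_one_eq_iff] at this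
  · refine ⟨by omega, Or.inr ⟨by omega, fun k hk => ?_⟩⟩
    have := hp (2 * k + 1) (by omega)
    rwa [show 2 * q + (2 * k + 1) = 2 * (q + k) + 1 by ring, pd_two_mul_add_one_eq_iff] at this

theorem exists_isLocalPeriodAt_pd (i : ℕ) : ∃ n, IsLocalPeriodAt pd i n := by
  induction i using Nat.strong_induction_on with
  | _ i ih =>
    rcases Nat.eq_zero_or_pos i with rfl | hi
    · exact ⟨1, le_rfl, Or.inr ⟨one_pos, by simp⟩⟩
    · obtain ⟨q, hq⟩ := ih (i / 2) (by omega)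
      exact ⟨2 * q, by simpa [Nat.div_add_mod] using hq.two_mul_add (Nat.mod_lt i two_pos)⟩

theorem pd_two_mul_add_one_eq_zero_iff : pd (2 * i + 1) = 0 ↔ pd i = 1 := by
  have := pd_le_one i; rw [pd_two_mul_add_one]; omega

theorem not_isLocalPeriodAt_two_mul_add_one (hi : 1 ≤ i) (h0 : pd i = 0) (hn : Odd n) :
    ¬ IsLocalPeriodAt pd (2 * i + 1) n := by
  obtain ⟨l, rfl⟩ := hn
  rintro ⟨-, ⟨hni, hs⟩ | ⟨-, hp⟩⟩
  · have := hs 0 (by omega)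
    rw [add_zero, add_zero, show 2 * i + 1 - (2 * l + 1) = 2 * (i - l) by omega, pd_two_mul,
      pd_two_mul_add_one_eq_zero_iff] at this
    omega
  · have := hp 1 (by omega)
    rw [pd_one, show 2 * l + 1 + 1 = 2 * (l + 1) by ring, pd_two_mul] at this
    omega

theorem not_isLocalPeriodAt_two_mul (hi : 1 ≤ i) (h0 : pd (i - 1) = 0) (hn : Odd n) :
    ¬ IsLocalPeriodAt pd (2 * i) n := by
  obtain ⟨l, rfl⟩ := hn
  rintro ⟨-, ⟨hni, hs⟩ | ⟨-, hp⟩⟩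
  · rcases Nat.eq_zero_or_pos l with rfl | hl
    · have := hs 0 one_pos
      rw [add_zero, pd_two_mul, show 2 * i - (2 * 0 + 1) + 0 = 2 * (i - 1) + 1 by omega, eq_comm,
        pd_two_mul_add_one_eq_zero_iff] at this
      omega
    · have h₀ := hs 0 (by omega)
      have h₂ := hs 2 (by omega)
      rw [add_zero, pd_two_mul, show 2 * i - (2 * l + 1) + 0 = 2 * (i - l - 1) + 1 by omega,
        eq_comm, pd_two_mul_add_one_eq_zero_iff] at h₀
      rw [show 2 * i + 2 = 2 * (i + 1) by ring, pd_two_mul,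
        show 2 * i - (2 * l + 1) + 2 = 2 * (i - l - 1 + 1) + 1 by omega, eq_comm,
        pd_two_mul_add_one_eq_zero_iff] at h₂
      have := pd_eq_zero_of_pd_succ_eq_one h₂
      omega
  · have := hp 1 (by omega)
    rw [pd_one, show 2 * l + 1 + 1 = 2 * (l + 1) by ring, pd_two_mul] at this
    omega

theorem isLocalPeriodAt_perFn_pd (i : ℕ) : IsLocalPeriodAt pd i (perFn pd i) :=
  isLocalPeriodAt_perFn (exists_isLocalPeriodAt_pd i).choose_spec

theorem one_le_perFn_pd (i : ℕ) : 1 ≤ perFn pd i := (isLocalPeriodAt_perFn_pd i).1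

theorem perFn_pd_two_mul_add_le (hr : r < 2) : perFn pd (2 * i + r) ≤ 2 * perFn pd i :=
  perFn_le ((isLocalPeriodAt_perFn_pd i).two_mul_add hr)

theorem perFn_pd_two_mul_add_of_even (hr : r < 2) (h : Even (perFn pd (2 * i + r))) :
    perFn pd (2 * i + r) = 2 * perFn pd i := by
  obtain ⟨q, hq⟩ := h
  refine le_antisymm (perFn_pd_two_mul_add_le hr) ?_
  have hper := isLocalPeriodAt_perFn_pd (2 * i + r)
  rw [hq, ← two_mul] at hper ⊢
  exact Nat.mul_le_mul_left 2 (perFn_le (hper.of_two_mul_add hr))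

theorem perFn_pd_eq_one_or (i : ℕ) :
    perFn pd i = 1 ∨ perFn pd (2 * i) = 1 ∨ perFn pd (2 * i + 1) = 1 := by
  rcases i with _ | l
  · exact Or.inl perFn_zero
  have := pd_le_one l; have := pd_le_one (l + 1)
  by_cases he : pd (l + 1) = pd l
  · exact Or.inl (perFn_succ_eq_one_iff.mpr he)
  by_cases h1 : pd (l + 1) = 1
  · refine Or.inr (Or.inr (perFn_succ_eq_one_iff.mpr ?_))
    rw [pd_two_mul, pd_two_mul_add_one_eq_zero_iff.mpr h1]
  · refine Or.inr (Or.inl ?_)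
    rw [show 2 * (l + 1) = 2 * l + 1 + 1 by ring, perFn_succ_eq_one_iff,
      show 2 * l + 1 + 1 = 2 * (l + 1) by ring, pd_two_mul,
      pd_two_mul_add_one_eq_zero_iff.mpr (by omega)]

theorem perFn_pd_pair_le (i : ℕ) :
    perFn pd (2 * i) + perFn pd (2 * i + 1) ≤ 2 * perFn pd i + 2 := by
  have h₀ : perFn pd (2 * i) ≤ 2 * perFn pd i := perFn_pd_two_mul_add_le (r := 0) two_pos
  have h₁ : perFn pd (2 * i + 1) ≤ 2 * perFn pd i := perFn_pd_two_mul_add_le one_lt_two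
  have := one_le_perFn_pd i
  rcases perFn_pd_eq_one_or i with h | h | h <;> omega

theorem perFn_pd_pair_ge (i : ℕ) :
    2 * perFn pd i + 1 ≤ perFn pd (2 * i) + perFn pd (2 * i + 1) := by
  have := one_le_perFn_pd (2 * i); have := one_le_perFn_pd (2 * i + 1)
  rcases Nat.eq_zero_or_pos i with rfl | hi
  · have : perFn pd 1 ≠ 1 := by simp [perFn_succ_eq_one_iff, pd_zero, pd_one]
    simp only [mul_zero, zero_add, perFn_zero] at *
    omega
  rcases Nat.le_one_iff_eq_zero_or_eq_one.mp (pd_le_one i) with h0 | h1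
  · have := perFn_pd_two_mul_add_of_even (i := i) one_lt_two <| Nat.not_odd_iff_even.mp
      fun h => not_isLocalPeriodAt_two_mul_add_one hi h0 h (isLocalPeriodAt_perFn_pd _)
    omega
  · have hprev : pd (i - 1) = 0 :=
      pd_eq_zero_of_pd_succ_eq_one (by rwa [Nat.sub_add_cancel hi])
    have : perFn pd (2 * i) = 2 * perFn pd i :=
      perFn_pd_two_mul_add_of_even (r := 0) two_pos <| Nat.not_odd_iff_even.mp
        fun h => not_isLocalPeriodAt_two_mul hi hprev h (isLocalPeriodAt_perFn_pd _)
    omega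

theorem sumFn_pd_two_mul_le (n : ℕ) : sumFn pd (2 * n) ≤ 2 * sumFn pd n + 2 * n :=
  calc sumFn pd (2 * n) = ∑ i ∈ Finset.range n, (perFn pd (2 * i) + perFn pd (2 * i + 1)) :=
        sumFn_two_mul n
    _ ≤ ∑ i ∈ Finset.range n, (2 * perFn pd i + 2) :=
        Finset.sum_le_sum fun i _ => perFn_pd_pair_le i
    _ = 2 * sumFn pd n + 2 * n := by
        simp [sumFn, Finset.sum_add_distrib, Finset.sum_mul, mul_comm]

theorem sumFn_pd_two_mul_ge (n : ℕ) : 2 * sumFn pd n + n ≤ sumFn pd (2 * n) :=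
  calc 2 * sumFn pd n + n = ∑ i ∈ Finset.range n, (2 * perFn pd i + 1) := by
        simp [sumFn, Finset.sum_add_distrib, Finset.mul_sum]
    _ ≤ ∑ i ∈ Finset.range n, (perFn pd (2 * i) + perFn pd (2 * i + 1)) :=
        Finset.sum_le_sum fun i _ => perFn_pd_pair_ge i
    _ = sumFn pd (2 * n) := (sumFn_two_mul n).symm

theorem sumFn_pd_one : sumFn pd 1 = 1 := by simp [sumFn, perFn_zero]

theorem sumFn_pd_two_le : sumFn pd 2 ≤ 3 := by
  have : perFn pd 1 ≤ 2 * perFn pd 0 := perFn_pd_two_mul_add_le (i := 0) one_lt_two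
  simp only [sumFn, Finset.sum_range_succ, Finset.sum_range_zero, perFn_zero] at this ⊢
  omega

end PeriodDoubling

section DoublingRecurrence

variable {S : ℕ → ℕ}

theorem add_two_le_of_le_two_mul_add (hS : Monotone S) (h₂ : S 2 ≤ 3)
    (hdouble : ∀ m, S (2 * m) ≤ 2 * S m + 2 * m) (j : ℕ) :
    ∀ n, 2 ^ j < n → n ≤ 2 ^ (j + 1) → S n + 2 ≤ (n - 1) * (j + 5) := by
  induction j with
  | zero =>
    intro n h₁ h₂'
    obtain rfl : n = 2 := by simp at h₁ h₂'; omega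
    omega
  | succ j ih =>
    intro n hlo hhi
    rw [pow_succ] at hlo hhi
    obtain ⟨m, hm_def⟩ : ∃ m, m = (n + 1) / 2 := ⟨_, rfl⟩
    have hm := ih m (by omega) (by rw [pow_succ]; omega)
    have hn : S n ≤ 2 * S m + 2 * m := (hS (by omega)).trans (hdouble m)
    calc S n + 2 ≤ 2 * ((m - 1) * (j + 5)) + 2 * (m - 1) := by omega
      _ = 2 * (m - 1) * (j + 1 + 5) := by ring
      _ ≤ (n - 1) * (j + 1 + 5) := Nat.mul_le_mul_right _ (by omega)

theorem mul_add_two_le_of_two_mul_add_le (hS : Monotone S) (h₁ : 1 ≤ S 1)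
    (hdouble : ∀ m, 2 * S m + m ≤ S (2 * m)) (j : ℕ) :
    ∀ n, 2 ^ j ≤ n → n < 2 ^ (j + 1) → (n + 1) * j + 2 ≤ 2 * S n := by
  induction j with
  | zero =>
    intro n h₁' h₂
    obtain rfl : n = 1 := by simp at h₁' h₂; omega
    omega
  | succ j ih =>
    intro n hlo hhi
    rw [pow_succ] at hlo hhi
    obtain ⟨m, hm_def⟩ : ∃ m, m = n / 2 := ⟨_, rfl⟩
    have hm := ih m (by omega) (by rw [pow_succ]; omega)
    have hn : 2 * S m + m ≤ S n := (hdouble m).trans (hS (by omega))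
    calc (n + 1) * (j + 1) + 2 ≤ (2 * m + 2) * (j + 1) + 2 := by
          gcongr (?_ * _) + _; omega
      _ = 2 * ((m + 1) * j + 2) + 2 * m := by ring
      _ ≤ 2 * S n := by linarith

end DoublingRecurrence

open Real

theorem Real.logb_two_add_div_sub_one_le {s x : ℝ} (hs : 0 < s) (hsx : s ≤ x)
    (hx : x ≤ 2 * s) : logb 2 s + x / s - 1 ≤ logb 2 x := by
  set t := x / s - 1
  have ht₀ : 0 ≤ t := by rw [sub_nonneg, le_div_iff₀ hs]; linarith
  have ht₁ : t ≤ 1 := by rw [sub_le_iff_le_add, div_le_iff₀ hs]; linarith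
  have hconc := strictConcaveOn_log_Ioi.concaveOn.2 (Set.mem_Ioi.mpr hs)
    (Set.mem_Ioi.mpr (by linarith : 0 < 2 * s)) (sub_nonneg.mpr ht₁) ht₀ (sub_add_cancel 1 t)
  have hxt : (1 - t) • s + t • (2 * s) = x := by
    simp only [smul_eq_mul, t]; field_simp; ring
  rw [hxt, smul_eq_mul, smul_eq_mul, log_mul two_ne_zero hs.ne'] at hconc
  have hlog2 : 0 < log 2 := log_pos one_lt_two
  have : logb 2 s + t ≤ logb 2 x := by
    rw [logb, logb, div_add' _ _ _ hlog2.ne', div_le_div_iff_of_pos_right hlog2]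
    linarith
  linarith

theorem sub_one_mul_add_five_sub_two_le {j : ℕ} {x : ℝ} (h₁ : 2 ^ j < x)
    (h₂ : x ≤ 2 * 2 ^ j) : (x - 1) * (j + 5) - 2 ≤ x * (4 / 3 * (j + x / 2 ^ j - 1) + 3) := by
  rcases Nat.lt_or_ge j 6 with hj | hj
  · interval_cases j <;> norm_num at h₁ h₂ ⊢ <;> nlinarith
  · have : (6 : ℝ) ≤ j := by exact_mod_cast hj
    have : 1 ≤ x / 2 ^ j := by rw [le_div_iff₀ (by positivity)]; linarith
    nlinarith

theorem perComplexity_pd_le {n : ℕ} (hn : 1 ≤ n) :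
    perComplexity pd n ≤ 4 / 3 * logb 2 n + 3 := by
  obtain rfl | hn₂ := hn.eq_or_lt
  · norm_num [perComplexity, sumFn_pd_one]
  obtain ⟨j, hj₁, hj₂⟩ : ∃ j, 2 ^ j < n ∧ n ≤ 2 ^ (j + 1) :=
    ⟨Nat.log 2 (n - 1), by have := Nat.pow_log_le_self 2 (x := n - 1) (by omega); omega,
      by have := Nat.lt_pow_succ_log_self one_lt_two (n - 1); omega⟩
  have hP : (sumFn pd n : ℝ) + 2 ≤ (n - 1) * (j + 5) := by
    have h : ((sumFn pd n + 2 : ℕ) : ℝ) ≤ ((n - 1) * (j + 5) : ℕ) := by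
      exact_mod_cast add_two_le_of_le_two_mul_add sumFn_mono sumFn_pd_two_le
        sumFn_pd_two_mul_le j n hj₁ hj₂
    push_cast [Nat.cast_sub hn] at h
    exact h
  have hs : (0 : ℝ) < 2 ^ j := by positivity
  have hsn : (2 : ℝ) ^ j < n := by exact_mod_cast hj₁
  have hns : (n : ℝ) ≤ 2 * 2 ^ j := by rw [← pow_succ']; exact_mod_cast hj₂
  have hL : j + n / 2 ^ j - 1 ≤ logb 2 n := by
    have := logb_two_add_div_sub_one_le hs hsn.le hns
    rwa [logb_pow, logb_self_eq_one one_lt_two, mul_one] at this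
  have key := sub_one_mul_add_five_sub_two_le hsn hns
  have hn₀ : (0 : ℝ) < n := by positivity
  rw [perComplexity, div_le_iff₀ hn₀]
  nlinarith

theorem le_perComplexity_pd {n : ℕ} (hn : 1 ≤ n) :
    1 / 3 * logb 2 n - 1 / 18 ≤ perComplexity pd n := by
  obtain ⟨j, hj₁, hj₂⟩ : ∃ j, 2 ^ j ≤ n ∧ n < 2 ^ (j + 1) :=
    ⟨Nat.log 2 n, Nat.pow_log_le_self 2 (by omega), Nat.lt_pow_succ_log_self one_lt_two n⟩
  have hP : ((n : ℝ) + 1) * j + 2 ≤ 2 * sumFn pd n := by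
    exact_mod_cast mul_add_two_le_of_two_mul_add_le sumFn_mono (by rw [sumFn_pd_one])
      sumFn_pd_two_mul_ge j n hj₁ hj₂
  have hn₀ : (0 : ℝ) < n := by exact_mod_cast hn
  have hL : logb 2 n < j + 1 := by
    rw [logb_lt_iff_lt_rpow one_lt_two hn₀, ← Nat.cast_add_one, rpow_natCast]
    exact_mod_cast hj₂
  rw [perComplexity, le_div_iff₀ hn₀]
  have key : (n : ℝ) * ((j + 1) / 3 - 1 / 18) ≤ ((n + 1) * j + 2) / 2 := by
    rcases Nat.lt_or_ge j 2 with hj | hj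
    · have : (n : ℝ) ≤ 3 := by
        have : n ≤ 3 := by interval_cases j <;> simp at hj₂ <;> omega
        exact_mod_cast this
      interval_cases j <;> norm_num <;> nlinarith
    · have : (2 : ℝ) ≤ j := by exact_mod_cast hj
      nlinarith
  nlinarith

theorem isTheta_log_of_logb_bounds {f : ℕ → ℝ} {a b c d : ℝ} (ha : 0 < a)
    (hlow : ∀ n : ℕ, 1 ≤ n → a * logb 2 n - b ≤ f n)
    (hup : ∀ n : ℕ, 1 ≤ n → f n ≤ c * logb 2 n + d) :
    f =Θ[atTop] fun n => log n := by
  set L : ℕ → ℝ := fun n => logb 2 n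
  have hLlog : L =Θ[atTop] fun n => log n := by
    simp only [L, logb, div_eq_inv_mul]
    exact (isTheta_refl _ _).const_mul_left (inv_ne_zero (log_pos one_lt_two).ne')
  have hconst (e : ℝ) : (fun _ : ℕ => e) =o[atTop] L :=
    (isLittleO_const_logb_atTop (b := 2) (by norm_num)).natCast_atTop
  have hL₀ : ∀ᶠ n in atTop, 0 ≤ L n := eventually_atTop.mpr
    ⟨1, fun n hn => logb_nonneg one_lt_two (by exact_mod_cast hn)⟩
  have hfL : f =O[atTop] L := by
    have hlowO : (fun n => a * L n - b) =O[atTop] L :=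
      ((isBigO_refl L _).const_mul_left a).sub (hconst b).isBigO
    have hupO : (fun n => c * L n + d) =O[atTop] L :=
      ((isBigO_refl L _).const_mul_left c).add (hconst d).isBigO
    refine (IsBigO.of_bound' ?_).trans
      ((isBigO_abs_left.2 hlowO).add (isBigO_abs_left.2 hupO))
    filter_upwards [eventually_ge_atTop 1] with n hn
    have h₁ := hlow n hn; have h₂ := hup n hn
    rw [Real.norm_eq_abs, Real.norm_eq_abs]
    refine le_trans (abs_le.mpr ⟨?_, ?_⟩) (le_abs_self _)
    · linarith [neg_abs_le (a * L n - b), abs_nonneg (c * L n + d)]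
    · linarith [le_abs_self (c * L n + d), abs_nonneg (a * L n - b)]
  have hLf : L =O[atTop] f := by
    have hLfb : L =O[atTop] fun n => f n + b := by
      refine IsBigO.of_bound a⁻¹ ?_
      filter_upwards [eventually_ge_atTop 1, hL₀] with n hn hn₀
      have := hlow n hn
      rw [Real.norm_of_nonneg hn₀, Real.norm_of_nonneg (by nlinarith), le_inv_mul_iff₀ ha]
      linarith
    have := ((hconst b).trans_isBigO hLfb).right_isBigO_sub
    simp only [add_sub_cancel_right] at this
    exact hLfb.trans this
  exact (IsTheta.trans ⟨hfL, hLf⟩ hLlog)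

theorem pd_perComplexity_bounds :
    (∀ n : ℕ, 1 ≤ n →
      (1 / 3 : ℝ) * Real.logb 2 n - 1 / 18 ≤ perComplexity pd n ∧
        perComplexity pd n ≤ (4 / 3 : ℝ) * Real.logb 2 n + 3) ∧
      (fun n : ℕ => perComplexity pd n) =Θ[atTop] (fun n : ℕ => Real.log n) :=
  ⟨fun _ hn => ⟨le_perComplexity_pd hn, perComplexity_pd_le hn⟩,
    isTheta_log_of_logb_bounds (by norm_num) (fun _ => le_perComplexity_pd)
      (fun _ => perComplexity_pd_le)⟩
end
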